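/- arXiv:1805.00533 — 2 statements merged into one kernel-verified Lean document; each statement's English description precedes it below -/
import Mathlib

section
/- ∫₀^∞ t³ e^{-t²/2} Φ(ρt/√(1-ρ²)) dt = (2 + 3ρ - ρ³)/2, where Φ is the standard normal CDF and -1 < ρ < 1. -/
open MeasureTheory Real Filter Set

noncomputable def Phi (x : ℝ) : ℝ :=
  ∫ s in Set.Iic x, (1 / Real.sqrt (2 * Real.pi)) * Real.exp (-s ^ 2 / 2)

noncomputable def stdPdf (x : ℝ) : ℝ := (1 / Real.sqrt (2 * Real.pi)) * Real.exp (-x ^ 2 / 2)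

noncomputable def phi2 (ρ x y : ℝ) : ℝ :=
  (1 / (2 * Real.pi * Real.sqrt (1 - ρ ^ 2))) *
    Real.exp (-(x ^ 2 - 2 * ρ * x * y + y ^ 2) / (2 * (1 - ρ ^ 2)))

noncomputable def sg (x : ℝ) : ℝ := if 0 ≤ x then 1 else -1

/-!
With `c = ρ / √(1 - ρ²)`, the function `F t = -(t² + 2) e^{-t²/2} Φ(c t)` is an antiderivative
of `t³ e^{-t²/2} Φ(c t) - c (t² + 2) e^{-t²/2} φ(c t)`, and `e^{-t²/2} φ(c t)` is again a Gaussian,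
`e^{-(1 + c²) t² / 2} / √(2π)`. Since `F 0 = -2 Φ 0 = -1` and `F` vanishes at infinity, the
integral equals `1` plus two elementary Gaussian moments on `(0, ∞)`.
-/

section StandardNormal

open ProbabilityTheory in
lemma stdPdf_eq_gaussianPDFReal : stdPdf = gaussianPDFReal 0 1 := by
  ext x; simp [stdPdf, gaussianPDFReal]

lemma stdPdf_nonneg (x : ℝ) : 0 ≤ stdPdf x := by
  unfold stdPdf; positivity

lemma continuous_stdPdf : Continuous stdPdf := by
  unfold stdPdf; fun_prop

lemma integrable_stdPdf : Integrable stdPdf := by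
  rw [stdPdf_eq_gaussianPDFReal]; exact ProbabilityTheory.integrable_gaussianPDFReal 0 1

lemma integral_stdPdf : ∫ x, stdPdf x = 1 := by
  rw [stdPdf_eq_gaussianPDFReal]
  exact ProbabilityTheory.integral_gaussianPDFReal_eq_one 0 one_ne_zero

lemma stdPdf_neg (x : ℝ) : stdPdf (-x) = stdPdf x := by
  simp [stdPdf]

lemma Phi_eq_setIntegral_stdPdf (x : ℝ) : Phi x = ∫ s in Iic x, stdPdf s := rfl

lemma Phi_nonneg (x : ℝ) : 0 ≤ Phi x :=
  setIntegral_nonneg measurableSet_Iic fun s _ => stdPdf_nonneg s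

lemma Phi_le_one (x : ℝ) : Phi x ≤ 1 :=
  integral_stdPdf ▸ setIntegral_le_integral integrable_stdPdf (.of_forall stdPdf_nonneg)

lemma abs_Phi_le_one (x : ℝ) : |Phi x| ≤ 1 :=
  abs_le.2 ⟨by linarith [Phi_nonneg x], Phi_le_one x⟩

lemma Phi_zero : Phi 0 = 1 / 2 := by
  have h_symm : ∫ s in Iic (0 : ℝ), stdPdf s = ∫ s in Ioi (0 : ℝ), stdPdf s := by
    simpa only [stdPdf_neg, neg_zero] using integral_comp_neg_Iic (0 : ℝ) stdPdf
  have h_total := intervalIntegral.integral_Iic_add_Ioi (b := 0)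
    integrable_stdPdf.integrableOn integrable_stdPdf.integrableOn
  rw [integral_stdPdf] at h_total
  rw [Phi_eq_setIntegral_stdPdf]
  linarith

lemma hasDerivAt_Phi (x : ℝ) : HasDerivAt Phi (stdPdf x) x := by
  have h_eq : Phi = fun u => Phi 0 + ∫ t in (0 : ℝ)..u, stdPdf t := by
    funext u
    rw [Phi_eq_setIntegral_stdPdf, Phi_eq_setIntegral_stdPdf,
      ← intervalIntegral.integral_Iic_sub_Iic integrable_stdPdf.integrableOn
        integrable_stdPdf.integrableOn]
    ring
  rw [h_eq]
  exact (intervalIntegral.integral_hasDerivAt_right (integrable_stdPdf.intervalIntegrable)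
    (continuous_stdPdf.stronglyMeasurableAtFilter volume _)
    continuous_stdPdf.continuousAt).const_add _

@[fun_prop]
lemma continuous_Phi : Continuous Phi :=
  continuous_iff_continuousAt.2 fun x => (hasDerivAt_Phi x).continuousAt

end StandardNormal

section GaussianMoments

variable {b : ℝ}

lemma tendsto_pow_mul_exp_neg_mul_sq_atTop (hb : 0 < b) (n : ℕ) :
    Tendsto (fun x : ℝ => x ^ n * exp (-b * x ^ 2)) atTop (nhds 0) := by
  refine ((rpow_mul_exp_neg_mul_sq_isLittleO_exp_neg hb n).trans_tendsto ?_).congr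
    fun x => by rw [rpow_natCast]
  exact tendsto_exp_atBot.comp (tendsto_id.const_mul_atTop_of_neg (by norm_num))

lemma integrableOn_pow_mul_exp_neg_mul_sq_Ioi (hb : 0 < b) (n : ℕ) :
    IntegrableOn (fun x : ℝ => x ^ n * exp (-b * x ^ 2)) (Ioi 0) := by
  simpa only [rpow_natCast] using
    integrableOn_rpow_mul_exp_neg_mul_sq hb (s := n) (by linarith [n.cast_nonneg (α := ℝ)])

lemma integral_sq_mul_exp_neg_mul_sq_Ioi (hb : 0 < b) :
    ∫ x in Ioi (0 : ℝ), x ^ 2 * exp (-b * x ^ 2) = √(π / b) / (4 * b) := by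
  have h_deriv (x : ℝ) : HasDerivAt (fun x => -(x * exp (-b * x ^ 2)) / (2 * b))
      (x ^ 2 * exp (-b * x ^ 2) - exp (-b * x ^ 2) / (2 * b)) x := by
    refine (((hasDerivAt_id' x).fun_mul ((hasDerivAt_pow 2 x).const_mul (-b)).exp).fun_neg
      |>.div_const (2 * b)).congr_deriv ?_
    field_simp
    ring
  have h_int := integrableOn_pow_mul_exp_neg_mul_sq_Ioi hb 2
  have h_gauss := (integrable_exp_neg_mul_sq hb).integrableOn (s := Ioi 0)
  have h_lim : Tendsto (fun x : ℝ => -(x * exp (-b * x ^ 2)) / (2 * b)) atTop (nhds 0) := by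
    simpa using ((tendsto_pow_mul_exp_neg_mul_sq_atTop hb 1).neg).div_const (2 * b)
  have h_ftc := integral_Ioi_of_hasDerivAt_of_tendsto
    (h_deriv 0).continuousAt.continuousWithinAt (fun x _ => h_deriv x)
    (h_int.sub (h_gauss.div_const _)) h_lim
  rw [integral_sub h_int (h_gauss.div_const _), integral_div, integral_gaussian_Ioi] at h_ftc
  simp only [zero_mul, neg_zero, zero_div, sub_zero] at h_ftc
  field_simp at h_ftc ⊢
  ring_nf at h_ftc ⊢
  linarith

end GaussianMoments

section SkewMoment

variable (c : ℝ)

noncomputable def skewAntideriv (t : ℝ) : ℝ :=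
  -((t ^ 2 + 2) * exp (-t ^ 2 / 2) * Phi (c * t))

lemma skewAntideriv_zero : skewAntideriv c 0 = -1 := by
  norm_num [skewAntideriv, Phi_zero]

lemma exp_mul_stdPdf_mul (t : ℝ) :
    exp (-t ^ 2 / 2) * stdPdf (c * t) = exp (-((1 + c ^ 2) / 2) * t ^ 2) / √(2 * π) := by
  rw [stdPdf, ← mul_comm (exp _), mul_one_div, ← mul_div_assoc, ← exp_add]
  congr 2
  ring

lemma hasDerivAt_skewAntideriv (t : ℝ) :
    HasDerivAt (skewAntideriv c)
      (t ^ 3 * exp (-t ^ 2 / 2) * Phi (c * t)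
        - c / √(2 * π) * ((t ^ 2 + 2) * exp (-((1 + c ^ 2) / 2) * t ^ 2))) t := by
  have h_poly : HasDerivAt (fun t : ℝ => t ^ 2 + 2) (2 * t) t := by
    simpa using (hasDerivAt_pow 2 t).add_const 2
  have h_exp : HasDerivAt (fun t : ℝ => exp (-t ^ 2 / 2)) (exp (-t ^ 2 / 2) * (-t)) t :=
    (((hasDerivAt_pow 2 t).fun_neg.div_const 2).exp).congr_deriv (by ring)
  have h_Phi : HasDerivAt (fun t => Phi (c * t)) (stdPdf (c * t) * c) t :=
    (hasDerivAt_Phi (c * t)).comp t (by simpa using (hasDerivAt_id' t).const_mul c)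
  refine ((h_poly.fun_mul h_exp).fun_mul h_Phi).fun_neg.congr_deriv ?_
  rw [show (t ^ 2 + 2) * exp (-t ^ 2 / 2) * (stdPdf (c * t) * c)
    = c * (t ^ 2 + 2) * (exp (-t ^ 2 / 2) * stdPdf (c * t)) by ring, exp_mul_stdPdf_mul]
  ring

lemma tendsto_skewAntideriv_atTop : Tendsto (skewAntideriv c) atTop (nhds 0) := by
  have h_bound : Tendsto (fun t : ℝ => t ^ 2 * exp (-(1 / 2) * t ^ 2)
      + 2 * (t ^ 0 * exp (-(1 / 2) * t ^ 2))) atTop (nhds 0) := by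
    simpa using (tendsto_pow_mul_exp_neg_mul_sq_atTop (b := 1 / 2) (by norm_num) 2).add
      ((tendsto_pow_mul_exp_neg_mul_sq_atTop (b := 1 / 2) (by norm_num) 0).const_mul 2)
  refine squeeze_zero_norm (fun t => ?_) h_bound
  rw [skewAntideriv, norm_neg, norm_mul, norm_of_nonneg (by positivity), norm_eq_abs]
  calc (t ^ 2 + 2) * exp (-t ^ 2 / 2) * |Phi (c * t)| ≤ (t ^ 2 + 2) * exp (-t ^ 2 / 2) :=
        mul_le_of_le_one_right (by positivity) (abs_Phi_le_one _)
    _ = _ := by ring_nf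

lemma integrableOn_cube_mul_exp_mul_Phi_Ioi :
    IntegrableOn (fun t => t ^ 3 * exp (-t ^ 2 / 2) * Phi (c * t)) (Ioi 0) := by
  have h_dom : IntegrableOn (fun t : ℝ => t ^ 3 * exp (-t ^ 2 / 2)) (Ioi 0) := by
    refine (integrableOn_pow_mul_exp_neg_mul_sq_Ioi (b := 1 / 2) (by norm_num) 3).congr_fun
      (fun t _ => ?_) measurableSet_Ioi
    ring_nf
  refine h_dom.mono' (Continuous.aestronglyMeasurable (by fun_prop)) ?_
  filter_upwards [ae_restrict_mem measurableSet_Ioi] with t (ht : 0 < t)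
  rw [norm_mul, norm_of_nonneg (by positivity), norm_eq_abs]
  exact mul_le_of_le_one_right (by positivity) (abs_Phi_le_one _)

lemma integrableOn_sq_add_two_mul_exp_Ioi :
    IntegrableOn (fun t => (t ^ 2 + 2) * exp (-((1 + c ^ 2) / 2) * t ^ 2)) (Ioi 0) := by
  have hb : 0 < (1 + c ^ 2) / 2 := by positivity
  refine ((integrableOn_pow_mul_exp_neg_mul_sq_Ioi hb 2).add
    (((integrable_exp_neg_mul_sq hb).integrableOn).const_mul 2)).congr_fun
    (fun t _ => ?_) measurableSet_Ioi
  simp only [Pi.add_apply]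
  ring

lemma integral_sq_add_two_mul_exp_Ioi :
    ∫ t in Ioi (0 : ℝ), (t ^ 2 + 2) * exp (-((1 + c ^ 2) / 2) * t ^ 2)
      = √(2 * π) * (3 + 2 * c ^ 2) / (2 * √(1 + c ^ 2) ^ 3) := by
  have hb : 0 < (1 + c ^ 2) / 2 := by positivity
  have h_sqrt : √(π / ((1 + c ^ 2) / 2)) = √(2 * π) / √(1 + c ^ 2) := by
    rw [← sqrt_div' _ (by positivity)]
    congr 1
    field_simp
  have hs : √(1 + c ^ 2) ^ 2 = 1 + c ^ 2 := sq_sqrt (by positivity)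
  simp only [add_mul]
  rw [integral_add (integrableOn_pow_mul_exp_neg_mul_sq_Ioi hb 2)
      (((integrable_exp_neg_mul_sq hb).integrableOn).const_mul 2),
    integral_const_mul, integral_sq_mul_exp_neg_mul_sq_Ioi hb, integral_gaussian_Ioi, h_sqrt]
  field_simp
  rw [hs]
  ring

theorem integral_cube_mul_exp_mul_Phi_Ioi :
    ∫ t in Ioi (0 : ℝ), t ^ 3 * exp (-t ^ 2 / 2) * Phi (c * t)
      = 1 + c * (3 + 2 * c ^ 2) / (2 * √(1 + c ^ 2) ^ 3) := by
  have h_int := integrableOn_cube_mul_exp_mul_Phi_Ioi c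
  have h_moment := (integrableOn_sq_add_two_mul_exp_Ioi c).const_mul (c / √(2 * π))
  have h_ftc := integral_Ioi_of_hasDerivAt_of_tendsto
    (hasDerivAt_skewAntideriv c 0).continuousAt.continuousWithinAt
    (fun t _ => hasDerivAt_skewAntideriv c t) (h_int.sub h_moment)
    (tendsto_skewAntideriv_atTop c)
  rw [integral_sub h_int h_moment, integral_const_mul, integral_sq_add_two_mul_exp_Ioi,
    skewAntideriv_zero, mul_div_assoc, ← mul_assoc,
    div_mul_cancel₀ c (by positivity : √(2 * π) ≠ 0)] at h_ftc
  linear_combination h_ftc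

end SkewMoment

theorem stmt1 (ρ : ℝ) (h1 : -1 < ρ) (h2 : ρ < 1) :
    ∫ t in Set.Ioi (0 : ℝ), t ^ 3 * Real.exp (-t ^ 2 / 2) * Phi (ρ * t / Real.sqrt (1 - ρ ^ 2))
      = (2 + 3 * ρ - ρ ^ 3) / 2 := by
  have h_pos : 0 < 1 - ρ ^ 2 := by nlinarith
  set r := √(1 - ρ ^ 2)
  have hr : 0 < r := sqrt_pos.2 h_pos
  have hr2 : r ^ 2 = 1 - ρ ^ 2 := sq_sqrt h_pos.le
  have h_norm : √(1 + (ρ / r) ^ 2) = 1 / r := by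
    rw [show 1 + (ρ / r) ^ 2 = (1 / r) ^ 2 by field_simp; linarith]
    exact sqrt_sq (by positivity)
  simp_rw [← div_mul_eq_mul_div]
  rw [integral_cube_mul_exp_mul_Phi_Ioi, h_norm]
  field_simp
  linear_combination (3 * ρ) * hr2
end

section
/- If (X,Y) is bivariate normal with standard normal marginals and correlation ρ ∈ (-1,1), then E[Y⁻·1_{X<0} + Y⁺·1_{X≥0}] = (1+ρ)/√(2π), where Y⁺ = max(Y,0) and Y⁻ = max(−Y,0). -/
/-!
The integrand equals `(|Y| + sg X * Y) / 2`. The density factors as the standard normal density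
in `x` times the `N(ρ x, 1 - ρ²)` density in `y`, so integrating out `y` first gives
`E[sg X * Y] = ρ E[sg X * X] = ρ E|X|`, while the symmetry of the density in `x` and `y` gives
`E|Y| = E|X|`; finally `E|X| = 2 / √(2π)`.
-/

open MeasureTheory Real Filter Set

open ProbabilityTheory
open scoped NNReal

lemma integral_Ioi_mul_exp_neg_mul_sq {b : ℝ} (hb : 0 < b) :
    ∫ x in Ioi (0 : ℝ), x * exp (-b * x ^ 2) = (2 * b)⁻¹ := by
  have h := integral_mul_cexp_neg_mul_sq (b := (b : ℂ)) (by simpa using hb)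
  rw [← Complex.ofReal_inj, ← integral_complex_ofReal]
  push_cast
  exact h

lemma integral_mul_gaussianPDFReal (m : ℝ) {v : ℝ≥0} (hv : v ≠ 0) :
    ∫ x, x * gaussianPDFReal m v x = m := by
  simpa [integral_gaussianReal_eq_integral_smul hv, mul_comm] using
    integral_id_gaussianReal (μ := m) (v := v)

lemma integrable_abs_mul_gaussianPDFReal_zero (v : ℝ≥0) :
    Integrable fun x => |x| * gaussianPDFReal 0 v x := by
  rcases eq_or_ne v 0 with rfl | hv
  · simp
  have hb : 0 < (2 * (v : ℝ))⁻¹ := by positivity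
  refine (((integrable_mul_exp_neg_mul_sq hb).norm).const_mul (√(2 * π * v))⁻¹).congr
    (.of_forall fun x => ?_)
  simp only [gaussianPDFReal, norm_mul, norm_of_nonneg (exp_pos _).le, Real.norm_eq_abs, sub_zero]
  ring_nf

lemma integral_abs_mul_gaussianPDFReal_zero {v : ℝ≥0} (hv : v ≠ 0) :
    ∫ x, |x| * gaussianPDFReal 0 v x = 2 * v / √(2 * π * v) := by
  have hb : 0 < (2 * (v : ℝ))⁻¹ := by positivity
  have h : ∀ x, |x| * gaussianPDFReal 0 v x
      = (√(2 * π * v))⁻¹ * (|x| * exp (-(2 * (v : ℝ))⁻¹ * |x| ^ 2)) := by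
    intro x
    rw [gaussianPDFReal, sq_abs, sub_zero]
    ring_nf
  simp_rw [h]
  rw [integral_const_mul, integral_comp_abs (f := fun x => x * exp (-(2 * (v : ℝ))⁻¹ * x ^ 2)),
    integral_Ioi_mul_exp_neg_mul_sq hb]
  field_simp

lemma phi2_comm (ρ x y : ℝ) : phi2 ρ x y = phi2 ρ y x := by
  unfold phi2; ring_nf

lemma phi2_eq_gaussianPDFReal_mul {ρ : ℝ} (hρ : ρ ^ 2 < 1) (x y : ℝ) :
    phi2 ρ x y = gaussianPDFReal 0 1 x * gaussianPDFReal (ρ * x) (1 - ρ ^ 2).toNNReal y := by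
  have hs : 0 < 1 - ρ ^ 2 := by linarith
  rw [gaussianPDFReal, gaussianPDFReal, Real.coe_toNNReal _ hs.le, NNReal.coe_one,
    mul_mul_mul_comm, ← mul_inv, ← Real.sqrt_mul (by positivity), ← exp_add, phi2, one_div]
  congr 2
  · rw [mul_one, ← mul_assoc, Real.sqrt_mul (by positivity), sqrt_mul_self (by positivity)]
  · field_simp
    ring

lemma measurable_phi2 (ρ : ℝ) : Measurable fun z : ℝ × ℝ => phi2 ρ z.1 z.2 := by
  unfold phi2; fun_prop

lemma integral_phi2_snd {ρ : ℝ} (hρ : ρ ^ 2 < 1) (x : ℝ) :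
    ∫ y, phi2 ρ x y = gaussianPDFReal 0 1 x := by
  have hv : (1 - ρ ^ 2).toNNReal ≠ 0 := by simpa using hρ
  simp_rw [phi2_eq_gaussianPDFReal_mul hρ, integral_const_mul,
    integral_gaussianPDFReal_eq_one _ hv, mul_one]

lemma integral_mul_phi2_snd {ρ : ℝ} (hρ : ρ ^ 2 < 1) (x : ℝ) :
    ∫ y, y * phi2 ρ x y = ρ * x * gaussianPDFReal 0 1 x := by
  have hv : (1 - ρ ^ 2).toNNReal ≠ 0 := by simpa using hρ
  simp_rw [phi2_eq_gaussianPDFReal_mul hρ, mul_left_comm _ (gaussianPDFReal 0 1 x),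
    integral_const_mul, integral_mul_gaussianPDFReal _ hv, mul_comm]

section Fubini

variable {ρ : ℝ} {a : ℝ → ℝ}

lemma integrable_fst_mul_phi2 (hρ : ρ ^ 2 < 1)
    (ha : Integrable fun x => a x * gaussianPDFReal 0 1 x) :
    Integrable fun z : ℝ × ℝ => a z.1 * phi2 ρ z.1 z.2 := by
  have hv : (1 - ρ ^ 2).toNNReal ≠ 0 := by simpa using hρ
  have h : ∀ z : ℝ × ℝ, a z.1 * phi2 ρ z.1 z.2
      = a z.1 * gaussianPDFReal 0 1 z.1 * gaussianPDFReal (ρ * z.1) (1 - ρ ^ 2).toNNReal z.2 :=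
    fun z => by rw [phi2_eq_gaussianPDFReal_mul hρ, mul_assoc]
  simp_rw [h]
  rw [Measure.volume_eq_prod]
  refine (integrable_prod_iff ?_).2 ⟨.of_forall fun x => ?_, ?_⟩
  · have hq : Measurable fun z : ℝ × ℝ => gaussianPDFReal (ρ * z.1) (1 - ρ ^ 2).toNNReal z.2 :=
      measurable_uncurry_gaussianPDFReal.comp (f := fun z : ℝ × ℝ => (ρ * z.1, _, z.2))
        ((measurable_fst.const_mul ρ).prodMk (measurable_const.prodMk measurable_snd))
    exact ha.1.comp_fst.mul hq.aestronglyMeasurable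
  · exact (integrable_gaussianPDFReal (ρ * x) _).const_mul (a x * gaussianPDFReal 0 1 x)
  · refine ha.norm.congr (.of_forall fun x => ?_)
    simp_rw [norm_mul, norm_of_nonneg (gaussianPDFReal_nonneg _ _ _), integral_const_mul,
      integral_gaussianPDFReal_eq_one _ hv, mul_one]

lemma integral_fst_mul_phi2 (hρ : ρ ^ 2 < 1)
    (ha : Integrable fun x => a x * gaussianPDFReal 0 1 x) :
    ∫ z : ℝ × ℝ, a z.1 * phi2 ρ z.1 z.2 = ∫ x, a x * gaussianPDFReal 0 1 x := by
  have hint := integrable_fst_mul_phi2 hρ ha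
  rw [Measure.volume_eq_prod] at hint ⊢
  simp_rw [integral_prod _ hint, integral_const_mul, integral_phi2_snd hρ]

lemma integrable_snd_mul_phi2 (hρ : ρ ^ 2 < 1)
    (ha : Integrable fun x => a x * gaussianPDFReal 0 1 x) :
    Integrable fun z : ℝ × ℝ => a z.2 * phi2 ρ z.1 z.2 := by
  have h := (integrable_fst_mul_phi2 hρ ha).swap
  simp_rw [Function.comp_def, Prod.fst_swap, Prod.snd_swap, ← phi2_comm] at h
  exact h

lemma integral_snd_mul_phi2 (hρ : ρ ^ 2 < 1)
    (ha : Integrable fun x => a x * gaussianPDFReal 0 1 x) :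
    ∫ z : ℝ × ℝ, a z.2 * phi2 ρ z.1 z.2 = ∫ x, a x * gaussianPDFReal 0 1 x := by
  rw [← integral_fst_mul_phi2 hρ ha, Measure.volume_eq_prod, ← integral_prod_swap]
  simp_rw [Prod.fst_swap, Prod.snd_swap, phi2_comm ρ]

lemma integral_fst_mul_snd_mul_phi2 (hρ : ρ ^ 2 < 1)
    (ha : Integrable fun z : ℝ × ℝ => a z.1 * z.2 * phi2 ρ z.1 z.2) :
    ∫ z : ℝ × ℝ, a z.1 * z.2 * phi2 ρ z.1 z.2 = ρ * ∫ x, a x * x * gaussianPDFReal 0 1 x := by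
  rw [Measure.volume_eq_prod] at ha ⊢
  simp_rw [integral_prod _ ha, mul_assoc, integral_const_mul, integral_mul_phi2_snd hρ,
    ← integral_const_mul]
  congr 1 with x
  ring

end Fubini

lemma measurable_sg : Measurable sg :=
  Measurable.ite measurableSet_Ici measurable_const measurable_const

lemma abs_sg (x : ℝ) : |sg x| = 1 := by
  unfold sg; split_ifs <;> norm_num

lemma sg_mul_self (x : ℝ) : sg x * x = |x| := by
  unfold sg; split_ifs with h
  · rw [abs_of_nonneg h, one_mul]
  · rw [abs_of_neg (not_le.1 h), neg_one_mul]

lemma max_neg_mul_ite_add_max_mul_ite (x y : ℝ) :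
    max (-y) 0 * (if x < 0 then (1 : ℝ) else 0) + max y 0 * (if 0 ≤ x then (1 : ℝ) else 0)
      = (|y| + sg x * y) / 2 := by
  unfold sg
  rcases le_total 0 y with hy | hy <;> by_cases hx : 0 ≤ x <;>
    simp [hx, hy, abs_of_nonneg, abs_of_nonpos]

lemma integrable_sg_mul_snd_mul_phi2 {ρ : ℝ} (hρ : ρ ^ 2 < 1) :
    Integrable fun z : ℝ × ℝ => sg z.1 * z.2 * phi2 ρ z.1 z.2 := by
  refine (integrable_snd_mul_phi2 hρ (integrable_abs_mul_gaussianPDFReal_zero 1)).mono ?_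
    (.of_forall fun z => ?_)
  · exact ((measurable_sg.comp measurable_fst).mul measurable_snd).mul
      (measurable_phi2 ρ) |>.aestronglyMeasurable
  · simp only [norm_mul, Real.norm_eq_abs, abs_sg, one_mul, abs_abs, le_refl]

theorem stmt8 (ρ : ℝ) (h1 : -1 < ρ) (h2 : ρ < 1) :
    ∫ p : ℝ × ℝ,
        (max (-p.2) 0 * (if p.1 < 0 then (1 : ℝ) else 0) +
          max p.2 0 * (if 0 ≤ p.1 then (1 : ℝ) else 0)) * phi2 ρ p.1 p.2
      = (1 + ρ) / Real.sqrt (2 * Real.pi) := by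
  have hρ : ρ ^ 2 < 1 := by nlinarith
  have hpdf := integrable_abs_mul_gaussianPDFReal_zero 1
  have habs := integrable_snd_mul_phi2 (ρ := ρ) hρ hpdf
  have hsg := integrable_sg_mul_snd_mul_phi2 hρ
  have hE : ∫ x, |x| * gaussianPDFReal 0 1 x = 2 / √(2 * π) := by
    simpa using integral_abs_mul_gaussianPDFReal_zero one_ne_zero
  have hsplit : ∀ z : ℝ × ℝ,
      (max (-z.2) 0 * (if z.1 < 0 then (1 : ℝ) else 0) +
          max z.2 0 * (if 0 ≤ z.1 then (1 : ℝ) else 0)) * phi2 ρ z.1 z.2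
        = (|z.2| * phi2 ρ z.1 z.2 + sg z.1 * z.2 * phi2 ρ z.1 z.2) / 2 := fun z => by
    rw [max_neg_mul_ite_add_max_mul_ite]; ring
  simp_rw [hsplit]
  rw [integral_div, integral_add habs hsg, integral_snd_mul_phi2 hρ hpdf,
    integral_fst_mul_snd_mul_phi2 hρ hsg]
  simp_rw [sg_mul_self, hE]
  ring
end
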